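/- arXiv:math/9801070 — 2 statements merged into one kernel-verified Lean document; each statement's English description precedes it below -/
import Mathlib

section
/- Let R be a commutative ring and 0 → M' →^f M →^g M'' → 0 a short exact sequence of R-modules. Then for every k ≥ 1 the induced map Λ^k g : Λ^k_R M → Λ^k_R M'' is surjective, and its kernel is the R-submodule of Λ^k_R M generated by all elements of the form f(m') ∧ x with m' ∈ M' and x ∈ Λ^{k-1}_R M. Equivalently, the sequence M' ⊗_R Λ^{k-1}_R M → Λ^k_R M → Λ^k_R M'' → 0, where the first map sends m' ⊗ x to f(m') ∧ x, is exact. -/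
/-!
Writing `K := ι(ker g) ∧ Λ^{k-1} M`, the map `Λ^k M → Λ^k M / K`, `(m_1,…,m_k) ↦ [m_1 ∧ ⋯ ∧ m_k]`,
is alternating and vanishes as soon as one `m_j` lies in `ker g`; by multilinearity it then only
depends on the classes `g(m_i)`, so it descends along the surjection `g` to an alternating map on
`M''`. The induced map `Λ^k M'' → Λ^k M / K` is a left inverse of `Λ^k g` modulo `K`, which forces
`Λ^k M ∩ ker (Λ^k g) ⊆ K`. Exactness of `f, g` identifies `ker g` with the image of `f`.
-/

open ExteriorAlgebra

namespace MultilinearMap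

variable {R ι M Q : Type*} [Ring R] [Fintype ι] [AddCommGroup M] [Module R M]
  [AddCommGroup Q] [Module R Q]

theorem map_eq_map_of_forall_sub_mem (φ : MultilinearMap R (fun _ : ι => M) Q)
    (N : Submodule R M) (hφ : ∀ v j, v j ∈ N → φ v = 0) {u w : ι → M}
    (huw : ∀ i, u i - w i ∈ N) : φ u = φ w := by
  classical
  have hsplit := φ.map_add_univ (u - w) w
  rw [sub_add_cancel] at hsplit
  rw [hsplit, ← Finset.add_sum_erase _ _ (Finset.mem_univ ∅), Finset.piecewise_empty,
    add_eq_left]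
  refine Finset.sum_eq_zero fun s hs => ?_
  obtain ⟨j, hj⟩ := Finset.nonempty_iff_ne_empty.mpr (Finset.ne_of_mem_erase hs)
  exact hφ _ j (by simpa [Finset.piecewise_eq_of_mem _ _ _ hj] using huw j)

end MultilinearMap

namespace AlternatingMap

variable {R ι M M'' Q : Type*} [Ring R] [Fintype ι] [AddCommGroup M] [Module R M]
  [AddCommGroup M''] [Module R M''] [AddCommGroup Q] [Module R Q]
  (g : M →ₗ[R] M'') (hg : Function.Surjective g) (φ : M [⋀^ι]→ₗ[R] Q)
  (hφ : ∀ v j, g (v j) = 0 → φ v = 0)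

include hφ in
theorem map_eq_map_of_comp_eq {u w : ι → M} (huw : g ∘ u = g ∘ w) : φ u = φ w :=
  φ.toMultilinearMap.map_eq_map_of_forall_sub_mem (LinearMap.ker g) hφ fun i => by
    rw [LinearMap.mem_ker, map_sub, sub_eq_zero]
    exact congrFun huw i

noncomputable def liftOfSurjective : M'' [⋀^ι]→ₗ[R] Q where
  toFun v := φ (Function.surjInv hg ∘ v)
  map_update_add' v j a b := by
    simp only [Function.comp_update, ← φ.map_update_add]
    refine φ.map_eq_map_of_comp_eq g hφ (funext fun i => ?_)
    by_cases hij : i = j <;> simp [Function.surjInv_eq hg, hij]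
  map_update_smul' v j c a := by
    simp only [Function.comp_update, ← φ.map_update_smul]
    refine φ.map_eq_map_of_comp_eq g hφ (funext fun i => ?_)
    by_cases hij : i = j <;> simp [Function.surjInv_eq hg, hij]
  map_eq_zero_of_eq' v i j hv hij :=
    φ.map_eq_zero_of_eq _ (by simp [hv]) hij

theorem liftOfSurjective_apply_comp (v : ι → M) :
    φ.liftOfSurjective g hg hφ (g ∘ v) = φ v :=
  φ.map_eq_map_of_comp_eq g hφ (funext fun i => Function.surjInv_eq hg (g (v i)))

end AlternatingMap

namespace ExteriorAlgebra

variable {R M M'' : Type*} [CommRing R] [AddCommGroup M] [Module R M]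
  [AddCommGroup M''] [Module R M'']

theorem ιMulti_mem_map_ι_mul_of_mem (N : Submodule R M) {n : ℕ} (v : Fin (n + 1) → M)
    (j : Fin (n + 1)) (hj : v j ∈ N) : ιMulti R (n + 1) v ∈ N.map (ι R) * ⋀[R]^n M := by
  have hswap : ιMulti R (n + 1) (v ∘ Equiv.swap 0 j) ∈ N.map (ι R) * ⋀[R]^n M := by
    rw [ιMulti_succ_apply]
    exact Submodule.mul_mem_mul (Submodule.mem_map_of_mem (by simpa using hj))
      (ιMulti_range R n ⟨_, rfl⟩)
  rw [AlternatingMap.map_perm] at hswap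
  exact (Submodule.smul_mem_iff' _ _).mp hswap

theorem map_exteriorPower_of_surjective {g : M →ₗ[R] M''} (hg : Function.Surjective g)
    (k : ℕ) : (⋀[R]^k M).map (map g).toLinearMap = ⋀[R]^k M'' := by
  change Submodule.map _ (LinearMap.range (ι R) ^ k) = LinearMap.range (ι R) ^ k
  rw [Submodule.map_pow, ← LinearMap.range_comp, map_comp_ι,
    LinearMap.range_comp_of_range_eq_top _ (LinearMap.range_eq_top.mpr hg)]

theorem exteriorPower_inf_ker_map_of_surjective {g : M →ₗ[R] M''} (hg : Function.Surjective g)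
    (n : ℕ) :
    ⋀[R]^(n + 1) M ⊓ LinearMap.ker (map g).toLinearMap =
      (LinearMap.ker g).map (ι R) * ⋀[R]^n M := by
  set K := (LinearMap.ker g).map (ι R) * ⋀[R]^n M
  apply le_antisymm
  · let φ := K.mkQ.compAlternatingMap (ιMulti R (n + 1))
    have hφ : ∀ v j, g (v j) = 0 → φ v = 0 := fun v j hj =>
      (Submodule.Quotient.mk_eq_zero K).mpr (ιMulti_mem_map_ι_mul_of_mem _ v j hj)
    let Φ := liftAlternating (Pi.single (n + 1) (φ.liftOfSurjective g hg hφ))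
    have hΦ : Set.EqOn (Φ ∘ₗ (map g).toLinearMap) K.mkQ (⋀[R]^(n + 1) M) := by
      rw [← ιMulti_span_fixedDegree]
      refine LinearMap.eqOn_span' ?_
      rintro _ ⟨v, rfl⟩
      rw [LinearMap.comp_apply, AlgHom.toLinearMap_apply, map_apply_ιMulti,
        liftAlternating_apply_ιMulti, Pi.single_eq_same,
        AlternatingMap.liftOfSurjective_apply_comp]
      rfl
    rintro y ⟨hy, hker⟩
    have hy0 := hΦ hy
    rw [LinearMap.comp_apply, LinearMap.mem_ker.mp hker, map_zero] at hy0
    exact (Submodule.Quotient.mk_eq_zero K).mp hy0.symm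
  · rw [Submodule.mul_le]
    rintro _ ⟨m, hm, rfl⟩ x hx
    refine ⟨?_, ?_⟩
    · change ι R m * x ∈ LinearMap.range (ι R) ^ (n + 1)
      rw [pow_succ']
      exact Submodule.mul_mem_mul (LinearMap.mem_range_self _ _) hx
    · rw [SetLike.mem_coe, LinearMap.mem_ker, AlgHom.toLinearMap_apply, map_mul, map_apply_ι,
        LinearMap.mem_ker.mp hm, map_zero, zero_mul]

end ExteriorAlgebra

theorem exteriorPower_map_surjective_and_ker_of_shortExact_general
    {R M' M M'' : Type*} [CommRing R]
    [AddCommGroup M'] [Module R M']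
    [AddCommGroup M] [Module R M]
    [AddCommGroup M''] [Module R M'']
    (f : M' →ₗ[R] M) (g : M →ₗ[R] M'')
    (hg : Function.Surjective g)
    (hfg : Function.Exact f g) (k : ℕ) (hk : 1 ≤ k) :
    Submodule.map (ExteriorAlgebra.map g).toLinearMap (⋀[R]^k M) = ⋀[R]^k M'' ∧
    (⋀[R]^k M) ⊓ LinearMap.ker (ExteriorAlgebra.map g).toLinearMap =
      Submodule.span R {z : ExteriorAlgebra R M |
        ∃ (m' : M') (x : ExteriorAlgebra R M),
          x ∈ ⋀[R]^(k-1) M ∧ z = ExteriorAlgebra.ι R (f m') * x} := by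
  obtain ⟨n, rfl⟩ := Nat.exists_eq_add_of_le' hk
  refine ⟨map_exteriorPower_of_surjective hg _, ?_⟩
  rw [exteriorPower_inf_ker_map_of_surjective hg, hfg.linearMap_ker_eq,
    Submodule.mul_eq_span_mul_set]
  congr 1
  ext z
  simp [Set.mem_mul, eq_comm]

/-- For a short exact sequence `0 → M' →f M →g M'' → 0` of modules over a commutative ring `R`
and `k ≥ 1`, the induced map `Λ^k g : Λ^k M → Λ^k M''` (the restriction of the algebra map
`ExteriorAlgebra.map g` to the `k`-th exterior power) is surjective onto `Λ^k M''`, and its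
kernel is the submodule generated by the elements `f(m') ∧ x` with `m' ∈ M'` and
`x ∈ Λ^{k-1} M`; i.e. the sequence `M' ⊗ Λ^{k-1} M → Λ^k M → Λ^k M'' → 0` is exact. -/
theorem exteriorPower_map_surjective_and_ker_of_shortExact
    {R M' M M'' : Type*} [CommRing R]
    [AddCommGroup M'] [Module R M']
    [AddCommGroup M] [Module R M]
    [AddCommGroup M''] [Module R M'']
    (f : M' →ₗ[R] M) (g : M →ₗ[R] M'')
    (hf : Function.Injective f) (hg : Function.Surjective g)
    (hfg : Function.Exact f g) (k : ℕ) (hk : 1 ≤ k) :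
    Submodule.map (ExteriorAlgebra.map g).toLinearMap (⋀[R]^k M) = ⋀[R]^k M'' ∧
    (⋀[R]^k M) ⊓ LinearMap.ker (ExteriorAlgebra.map g).toLinearMap =
      Submodule.span R {z : ExteriorAlgebra R M |
        ∃ (m' : M') (x : ExteriorAlgebra R M),
          x ∈ ⋀[R]^(k-1) M ∧ z = ExteriorAlgebra.ι R (f m') * x} :=
  exteriorPower_map_surjective_and_ker_of_shortExact_general f g hg hfg k hk
end

section
/- Let ρ : ℤ^r → ℂˣ be a nontrivial group homomorphism and let ℂ_ρ denote the corresponding one-dimensional representation of the free abelian group ℤ^r over ℂ. Then the group homology H_n(ℤ^r, ℂ_ρ) vanishes for every n ≥ 0. -/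
open CategoryTheory

/-- The one-dimensional representation of a group `G` over `ℂ` attached to a character
`ρ : G →* ℂˣ`: the element `g` acts on `ℂ` as multiplication by `ρ g`. -/
noncomputable def charRep (G : Type*) [Group G] (ρ : G →* ℂˣ) : Representation ℂ G ℂ where
  toFun g := (ρ g : ℂ) • LinearMap.id
  map_one' := by
    simp only [map_one, Units.val_one, one_smul]
    rfl
  map_mul' g h := by
    simp only [map_mul, Units.val_mul, mul_smul]
    ext
    simp [smul_smul, mul_comm]

noncomputable instance charRepAddCommGroup (G : Type*) [Group G] (ρ : G →* ℂˣ) :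
    AddCommGroup ((charRep G ρ).asModule) :=
  inferInstanceAs (AddCommGroup ℂ)

section Aux

open CategoryTheory.Limits

/-- `homologyMap` is compatible with scalar multiplication. -/
lemma homologyMap_smul_aux {R : Type*} [Semiring R] {C : Type*} [Category C] [Preadditive C]
    [Linear R C] {ι : Type*} {c : ComplexShape ι} {K L : HomologicalComplex C c}
    (f : K ⟶ L) (r : R) (i : ι) [K.HasHomology i] [L.HasHomology i] :
    HomologicalComplex.homologyMap (r • f) i = r • HomologicalComplex.homologyMap f i := by
  have h : (HomologicalComplex.shortComplexFunctor C c i).map (r • f) =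
      r • (HomologicalComplex.shortComplexFunctor C c i).map f := by
    ext <;> rfl
  rw [HomologicalComplex.homologyMap, h, ShortComplex.homologyMap_smul]
  rfl

end Aux

/-- For a nontrivial character `ρ : ℤ^r → ℂˣ`, the group homology `H_n(ℤ^r, ℂ_ρ)`, i.e.
`Tor_n^{ℂ[ℤ^r]}(ℂ_triv, ℂ_ρ)`, vanishes for all `n ≥ 0`. -/
theorem groupHomology_zpow_char_vanishes (r : ℕ)
    (ρ : Multiplicative (Fin r → ℤ) →* ℂˣ) (hρ : ρ ≠ 1) (n : ℕ) :
    Limits.IsZero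
      (((Tor (ModuleCat (MonoidAlgebra ℂ (Multiplicative (Fin r → ℤ)))) n).obj
        (ModuleCat.of (MonoidAlgebra ℂ (Multiplicative (Fin r → ℤ)))
          ((charRep (Multiplicative (Fin r → ℤ)) 1).asModule))).obj
        (ModuleCat.of (MonoidAlgebra ℂ (Multiplicative (Fin r → ℤ)))
          ((charRep (Multiplicative (Fin r → ℤ)) ρ).asModule))) := by
  classical
  obtain ⟨g, hg⟩ : ∃ g, ρ g ≠ 1 := by
    by_contra h
    push_neg at h
    exact hρ (MonoidHom.ext fun x => h x)
  have ha1 : ((ρ g : ℂˣ) : ℂ) ≠ 1 := fun h => hg (Units.ext (by simpa using h))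
  set R := MonoidAlgebra ℂ (Multiplicative (Fin r → ℤ)) with hR
  set M : ModuleCat R := ModuleCat.of R ((charRep (Multiplicative (Fin r → ℤ)) 1).asModule) with hM0
  set N : ModuleCat R := ModuleCat.of R ((charRep (Multiplicative (Fin r → ℤ)) ρ).asModule) with hN0
  set F := (MonoidalCategory.tensoringLeft (ModuleCat R)).obj M with hF
  show Limits.IsZero ((F.leftDerived n).obj N)
  let P : ProjectiveResolution N := (HasProjectiveResolution.out (Z := N)).some
  refine Limits.IsZero.of_iso ?_ (P.isoLeftDerivedObj F n)
  set K := (F.mapHomologicalComplex (ComplexShape.down ℕ)).obj P.complex with hK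
  show Limits.IsZero (K.homology n)
  set a : ℂ := ((ρ g : ℂˣ) : ℂ) with ha
  set c1 : R := MonoidAlgebra.single g 1 with hc1
  set r1 : R := c1 - 1 with hr1
  set r2 : R := c1 - algebraMap ℂ R a with hr2
  -- the element `r1` acts as zero on M
  have hMz : (r1 • 𝟙 M : M ⟶ M) = 0 := by
    ext m
    show r1 • m = 0
    rw [hr1, sub_smul, one_smul, sub_eq_zero]
    show (charRep (Multiplicative (Fin r → ℤ)) 1).asAlgebraHom c1 m = m
    rw [hc1]
    rw [show (MonoidAlgebra.single g 1 : R) = MonoidAlgebra.single g 1 from rfl,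
      Representation.asAlgebraHom_single]
    simp [charRep]
    rfl
  -- the element `r2` acts as zero on N
  have hNz : (r2 • 𝟙 N : N ⟶ N) = 0 := by
    ext m
    show r2 • m = 0
    rw [hr2, sub_smul, sub_eq_zero]
    show (charRep (Multiplicative (Fin r → ℤ)) ρ).asAlgebraHom c1 m = (charRep (Multiplicative (Fin r → ℤ)) ρ).asAlgebraHom (algebraMap ℂ R a) m
    rw [hc1, AlgHom.commutes,
      show (MonoidAlgebra.single g 1 : R) = MonoidAlgebra.single g 1 from rfl,
      Representation.asAlgebraHom_single]
    simp [charRep, Algebra.algebraMap_eq_smul_one]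
    rfl
  -- hence `r1` acts as zero on the complex K
  have hK1 : (r1 • 𝟙 K : K ⟶ K) = 0 := by
    apply HomologicalComplex.hom_ext
    intro i
    show r1 • 𝟙 (K.X i) = 0
    show r1 • 𝟙 (MonoidalCategory.tensorObj M (P.complex.X i)) = 0
    rw [← MonoidalCategory.id_whiskerRight, ← MonoidalLinear.smul_whiskerRight, hMz,
      MonoidalPreadditive.zero_whiskerRight]
  have hs1 : r1 • 𝟙 (K.homology n) = 0 := by
    rw [← HomologicalComplex.homologyMap_id, ← homologyMap_smul_aux, hK1,
      HomologicalComplex.homologyMap_zero]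
  -- `r2 • 𝟙 P.complex` lifts the zero map, hence is null-homotopic
  have hπ : (r2 • 𝟙 P.complex) ≫ P.π = 0 := by
    rw [Linear.smul_comp, Category.id_comp]
    apply HomologicalComplex.hom_ext
    intro i
    by_cases hi : i = 0
    · subst hi
      show r2 • P.π.f 0 = 0
      have hz : r2 • 𝟙 (((ChainComplex.single₀ (ModuleCat R)).obj N).X 0) = 0 := by
        set e := HomologicalComplex.singleObjXSelf (ComplexShape.down ℕ) 0 N with he
        rw [show 𝟙 (((ChainComplex.single₀ (ModuleCat R)).obj N).X 0) = e.hom ≫ e.inv from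
          (e.hom_inv_id).symm,
          show r2 • (e.hom ≫ e.inv) = e.hom ≫ (r2 • 𝟙 N) ≫ e.inv from by
            simp only [Linear.smul_comp, Linear.comp_smul, Category.id_comp],
          hNz]
        simp
        rfl
      rw [show r2 • P.π.f 0 = P.π.f 0 ≫ (r2 • 𝟙 _) from by rw [Linear.comp_smul, Category.comp_id],
        hz, Limits.comp_zero]
    · show (r2 • P.π).f i = (0 : P.complex ⟶ _).f i
      apply (HomologicalComplex.isZero_single_obj_X (ComplexShape.down ℕ) 0 N i hi).eq_of_tgt
  have h0 : Homotopy (r2 • 𝟙 P.complex) 0 := ProjectiveResolution.liftHomotopyZero _ hπ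
  have h0' : Homotopy ((F.mapHomologicalComplex (ComplexShape.down ℕ)).map (r2 • 𝟙 P.complex))
      ((F.mapHomologicalComplex (ComplexShape.down ℕ)).map 0) :=
    Functor.mapHomotopy F h0
  have hs2 : r2 • 𝟙 (K.homology n) = 0 := by
    have h1 : (F.mapHomologicalComplex (ComplexShape.down ℕ)).map (r2 • 𝟙 P.complex) =
        r2 • 𝟙 K := by
      rw [Functor.map_smul, CategoryTheory.Functor.map_id]
    have h2 := h0'.homologyMap_eq n
    rw [h1, Functor.map_zero, HomologicalComplex.homologyMap_zero, homologyMap_smul_aux,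
      HomologicalComplex.homologyMap_id] at h2
    exact h2
  -- combine the two
  have h3 : (algebraMap ℂ R (a - 1)) • 𝟙 (K.homology n) = 0 := by
    have : algebraMap ℂ R (a - 1) = r1 - r2 := by
      rw [hr1, hr2, map_sub, map_one]
      ring
    rw [this, sub_smul, hs1, hs2, sub_zero]
  have h4 : 𝟙 (K.homology n) = 0 := by
    have h5 := congrArg (fun f => (algebraMap ℂ R (a - 1)⁻¹) • f) h3
    simp only [smul_smul, ← map_mul, smul_zero] at h5
    rw [inv_mul_cancel₀ (sub_ne_zero.mpr ha1), map_one, one_smul] at h5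
    exact h5
  exact (Limits.IsZero.iff_id_eq_zero _).mpr h4
end
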